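/- The function A(ξ,η) = η⁴ ∫₀^{2π}∫₀^{2π} (√2+cos φ)/|X(φ,θ) + ξ e_x|⁴ dφ dθ is smooth on (√2+1, ∞) × (0,∞), strictly increasing in η, strictly decreasing in ξ, with A(ξ,η) → 0 as η → 0 and A(ξ,η) → ∞ as η → ∞ for each fixed ξ. -/

import Mathlib

open Real intervalIntegral MeasureTheory Metric

/-- Parametrization of the Clifford torus in `ℝ³`. -/
noncomputable def cliffordX (φ θ : ℝ) : Fin 3 → ℝ :=
  ![(Real.sqrt 2 + Real.cos φ) * Real.cos θ,
    (Real.sqrt 2 + Real.cos φ) * Real.sin θ,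
    Real.sin φ]

/-- The Euclidean area of the inverted Clifford torus,
`A(ξ,η) = η⁴ ∫₀^{2π}∫₀^{2π} (√2+cos φ)/|X(φ,θ)+ξe_x|⁴ dφ dθ`. -/
noncomputable def torArea (ξ η : ℝ) : ℝ :=
  η ^ 4 * ∫ θ in (0:ℝ)..(2 * π), ∫ φ in (0:ℝ)..(2 * π),
    (Real.sqrt 2 + Real.cos φ) /
      (((cliffordX φ θ 0 + ξ) ^ 2 + cliffordX φ θ 1 ^ 2 + cliffordX φ θ 2 ^ 2) ^ 2)

noncomputable def tden (ξ φ θ : ℝ) : ℝ :=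
  (cliffordX φ θ 0 + ξ) ^ 2 + cliffordX φ θ 1 ^ 2 + cliffordX φ θ 2 ^ 2

noncomputable def tg (ξ φ θ : ℝ) : ℝ := (Real.sqrt 2 + Real.cos φ) / (tden ξ φ θ) ^ 2

lemma cont_cliffordX (i : Fin 3) : Continuous fun p : ℝ × ℝ => cliffordX p.1 p.2 i := by
  fin_cases i <;> simp [cliffordX] <;> fun_prop

lemma one_lt_sqrt2 : (1:ℝ) < Real.sqrt 2 := by
  nlinarith [Real.sq_sqrt (by norm_num : (2:ℝ) ≥ 0), Real.sqrt_nonneg 2]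

lemma num_pos (φ : ℝ) : 0 < Real.sqrt 2 + Real.cos φ := by
  nlinarith [Real.neg_one_le_cos φ, one_lt_sqrt2]

lemma abs_x0 (φ θ : ℝ) : |cliffordX φ θ 0| ≤ Real.sqrt 2 + 1 := by
  have h1 := Real.neg_one_le_cos φ
  have h2 := Real.cos_le_one φ
  have h3 := Real.neg_one_le_cos θ
  have h4 := Real.cos_le_one θ
  have := one_lt_sqrt2
  simp only [cliffordX, Matrix.cons_val_zero]
  rw [abs_le]
  constructor <;> nlinarith

lemma x0_add_pos {ξ : ℝ} (hξ : Real.sqrt 2 + 1 < ξ) (φ θ : ℝ) :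
    ξ - (Real.sqrt 2 + 1) ≤ cliffordX φ θ 0 + ξ := by
  have := abs_le.1 (abs_x0 φ θ)
  linarith [this.1]

lemma tden_pos {ξ : ℝ} (hξ : Real.sqrt 2 + 1 < ξ) (φ θ : ℝ) : 0 < tden ξ φ θ := by
  have h := x0_add_pos hξ φ θ
  have : 0 < cliffordX φ θ 0 + ξ := by linarith
  unfold tden
  nlinarith [sq_nonneg (cliffordX φ θ 1), sq_nonneg (cliffordX φ θ 2)]

lemma tg_pos {ξ : ℝ} (hξ : Real.sqrt 2 + 1 < ξ) (φ θ : ℝ) : 0 < tg ξ φ θ :=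
  div_pos (num_pos φ) (pow_pos (tden_pos hξ φ θ) 2)

lemma cont_tg {ξ : ℝ} (hξ : Real.sqrt 2 + 1 < ξ) :
    Continuous fun p : ℝ × ℝ => tg ξ p.1 p.2 := by
  apply Continuous.div
  · fun_prop
  · exact (((((cont_cliffordX 0).add continuous_const).pow 2).add
      ((cont_cliffordX 1).pow 2)).add ((cont_cliffordX 2).pow 2)).pow 2
  · exact fun p => (pow_pos (tden_pos hξ p.1 p.2) 2).ne'

noncomputable def cdenC (z : ℂ) (φ θ : ℝ) : ℂ :=
  ((cliffordX φ θ 0 : ℝ) + z) ^ 2 + (cliffordX φ θ 1 : ℝ) ^ 2 + (cliffordX φ θ 2 : ℝ) ^ 2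

noncomputable def cgC (z : ℂ) (φ θ : ℝ) : ℂ :=
  ((Real.sqrt 2 + Real.cos φ : ℝ) : ℂ) / (cdenC z φ θ) ^ 2

noncomputable def cgC' (z : ℂ) (φ θ : ℝ) : ℂ :=
  -(4 * ((Real.sqrt 2 + Real.cos φ : ℝ) : ℂ) * ((cliffordX φ θ 0 : ℝ) + z)) / (cdenC z φ θ) ^ 3

def UC : Set ℂ := {z | Real.sqrt 2 + 1 < z.re}

lemma isOpen_UC : IsOpen UC := isOpen_lt continuous_const Complex.continuous_re

lemma cdenC_real (ξ : ℝ) (φ θ : ℝ) : cdenC (ξ : ℂ) φ θ = ((tden ξ φ θ : ℝ) : ℂ) := by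
  unfold cdenC tden; push_cast; ring

lemma cdenC_lower {z : ℂ} (hz : z ∈ UC) (φ θ : ℝ) :
    (z.re - (Real.sqrt 2 + 1)) ^ 2 ≤ ‖cdenC z φ θ‖ := by
  set x := cliffordX φ θ 0 with hx
  set s : ℝ := cliffordX φ θ 1 ^ 2 + cliffordX φ θ 2 ^ 2 with hs
  have hs0 : 0 ≤ s := by positivity
  have hfac : cdenC z φ θ =
      ((x : ℂ) + z + Complex.I * Real.sqrt s) * ((x : ℂ) + z - Complex.I * Real.sqrt s) := by
    have : ((Real.sqrt s : ℝ) : ℂ) ^ 2 = (s : ℂ) := by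
      rw [← Complex.ofReal_pow, Real.sq_sqrt hs0]
    unfold cdenC
    rw [show ((x:ℂ)+z+Complex.I*Real.sqrt s)*((x:ℂ)+z-Complex.I*Real.sqrt s)
        = ((x:ℂ)+z)^2 - Complex.I^2 * ((Real.sqrt s : ℝ):ℂ)^2 by ring, this, Complex.I_sq]
    rw [hs]
    push_cast
    ring
  have hre : z.re - (Real.sqrt 2 + 1) ≤ x + z.re := by
    have := abs_le.1 (abs_x0 φ θ); linarith [this.1]
  have hrepos : 0 < z.re - (Real.sqrt 2 + 1) := by simpa [UC, sub_pos] using hz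
  have k1 : z.re - (Real.sqrt 2 + 1) ≤ ‖(x : ℂ) + z + Complex.I * Real.sqrt s‖ := by
    calc z.re - (Real.sqrt 2 + 1) ≤ x + z.re := hre
    _ ≤ |((x : ℂ) + z + Complex.I * Real.sqrt s).re| := by
        simp [Complex.add_re, Complex.mul_re]
        rw [abs_of_nonneg] <;> linarith
    _ ≤ ‖_‖ := Complex.abs_re_le_norm _
  have k2 : z.re - (Real.sqrt 2 + 1) ≤ ‖(x : ℂ) + z - Complex.I * Real.sqrt s‖ := by
    calc z.re - (Real.sqrt 2 + 1) ≤ x + z.re := hre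
    _ ≤ |((x : ℂ) + z - Complex.I * Real.sqrt s).re| := by
        simp [Complex.sub_re, Complex.add_re, Complex.mul_re]
        rw [abs_of_nonneg] <;> linarith
    _ ≤ ‖_‖ := Complex.abs_re_le_norm _
  rw [hfac, norm_mul, sq]
  exact mul_le_mul k1 k2 hrepos.le (norm_nonneg _)

lemma cdenC_ne {z : ℂ} (hz : z ∈ UC) (φ θ : ℝ) : cdenC z φ θ ≠ 0 := by
  have h := cdenC_lower hz φ θ
  have hrepos : 0 < z.re - (Real.sqrt 2 + 1) := by simpa [UC, sub_pos] using hz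
  intro h0
  rw [h0] at h
  simp at h
  nlinarith

lemma hasDerivAt_cgC {z : ℂ} (hz : z ∈ UC) (φ θ : ℝ) :
    HasDerivAt (fun w => cgC w φ θ) (cgC' z φ θ) z := by
  have hd : HasDerivAt (fun w => (cdenC w φ θ) ^ 2)
      (2 * cdenC z φ θ * (2 * ((cliffordX φ θ 0 : ℝ) + z))) z := by
    have h1 : HasDerivAt (fun w : ℂ => cdenC w φ θ) (2 * ((cliffordX φ θ 0 : ℝ) + z)) z := by
      unfold cdenC
      have : HasDerivAt (fun w : ℂ => ((cliffordX φ θ 0 : ℝ) + w) ^ 2)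
          (2 * ((cliffordX φ θ 0 : ℝ) + z) ^ 1 * 1) z :=
        ((hasDerivAt_id z).const_add _).pow 2
      simpa using (this.add_const (((cliffordX φ θ 1 : ℝ) : ℂ) ^ 2)).add_const (((cliffordX φ θ 2 : ℝ) : ℂ) ^ 2)
    simpa [pow_one, mul_assoc] using (h1.fun_pow 2)
  have hne : (cdenC z φ θ) ^ 2 ≠ 0 := pow_ne_zero 2 (cdenC_ne hz φ θ)
  have := (hasDerivAt_const z ((Real.sqrt 2 + Real.cos φ : ℝ) : ℂ)).div hd hne
  refine HasDerivAt.congr_deriv this ?_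
  unfold cgC'
  have h0 := cdenC_ne hz φ θ
  field_simp [h0]
  ring

lemma cont_cdenC {z : ℂ} : Continuous fun p : ℝ × ℝ => cdenC z p.1 p.2 := by
  unfold cdenC
  apply Continuous.add
  apply Continuous.add
  · exact ((Complex.continuous_ofReal.comp (cont_cliffordX 0)).add continuous_const).pow 2
  · exact (Complex.continuous_ofReal.comp (cont_cliffordX 1)).pow 2
  · exact (Complex.continuous_ofReal.comp (cont_cliffordX 2)).pow 2

lemma cont_cgC {z : ℂ} (hz : z ∈ UC) : Continuous fun p : ℝ × ℝ => cgC z p.1 p.2 := by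
  unfold cgC
  apply Continuous.div
  · fun_prop
  · exact cont_cdenC.pow 2
  · exact fun p => pow_ne_zero 2 (cdenC_ne hz p.1 p.2)

lemma cont_cgC' {z : ℂ} (hz : z ∈ UC) : Continuous fun p : ℝ × ℝ => cgC' z p.1 p.2 := by
  unfold cgC'
  apply Continuous.div
  · apply Continuous.neg
    apply Continuous.mul
    · fun_prop
    · exact (Complex.continuous_ofReal.comp (cont_cliffordX 0)).add continuous_const
  · exact cont_cdenC.pow 3
  · exact fun p => pow_ne_zero 3 (cdenC_ne hz p.1 p.2)

lemma ball_sub_UC {z0 : ℂ} (hz : z0 ∈ UC) {z : ℂ}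
    (hzb : z ∈ ball z0 ((z0.re - (Real.sqrt 2 + 1)) / 2)) :
    z ∈ UC ∧ (z0.re - (Real.sqrt 2 + 1)) / 2 ≤ z.re - (Real.sqrt 2 + 1) := by
  set ε := (z0.re - (Real.sqrt 2 + 1)) / 2 with hεdef
  have hre : |z.re - z0.re| ≤ ‖z - z0‖ := by
    simpa using Complex.abs_re_le_norm (z - z0)
  rw [mem_ball, Complex.dist_eq] at hzb
  have h1 : |z.re - z0.re| < ε := lt_of_le_of_lt hre hzb
  have h2 := abs_lt.1 h1
  constructor
  · show Real.sqrt 2 + 1 < z.re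
    have hpos : 0 < z0.re - (Real.sqrt 2 + 1) := by simpa [UC, sub_pos] using hz
    simp only [hεdef] at h2 ⊢
    linarith [h2.1]
  · have hpos : 0 < z0.re - (Real.sqrt 2 + 1) := by simpa [UC, sub_pos] using hz
    simp only [hεdef] at h2 ⊢
    linarith [h2.1]

lemma norm_cgC'_le {z : ℂ} (hz : z ∈ UC) {δ : ℝ} (hδ : 0 < δ)
    (hδz : δ ≤ z.re - (Real.sqrt 2 + 1)) (hnz : ‖z‖ ≤ Real.sqrt 2 + 1 + δ + ‖z‖)
    (φ θ : ℝ) (M : ℝ) (hM : ‖z‖ ≤ M) :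
    ‖cgC' z φ θ‖ ≤ 4 * (Real.sqrt 2 + 1) * (Real.sqrt 2 + 1 + M) / δ ^ 6 := by
  have hd : δ ^ 2 ≤ ‖cdenC z φ θ‖ := by
    calc δ ^ 2 ≤ (z.re - (Real.sqrt 2 + 1)) ^ 2 := by nlinarith
    _ ≤ _ := cdenC_lower hz φ θ
  have hdpos : 0 < ‖cdenC z φ θ‖ := lt_of_lt_of_le (by positivity) hd
  have hnum : ‖(-(4 * ((Real.sqrt 2 + Real.cos φ : ℝ) : ℂ) *
      ((cliffordX φ θ 0 : ℝ) + z)))‖ ≤ 4 * (Real.sqrt 2 + 1) * (Real.sqrt 2 + 1 + M) := by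
    rw [norm_neg, norm_mul, norm_mul]
    have h1 : ‖(4:ℂ)‖ = 4 := by norm_num
    have h2 : ‖((Real.sqrt 2 + Real.cos φ : ℝ) : ℂ)‖ ≤ Real.sqrt 2 + 1 := by
      rw [Complex.norm_real, Real.norm_eq_abs, abs_of_pos (num_pos φ)]
      linarith [Real.cos_le_one φ]
    have h3 : ‖((cliffordX φ θ 0 : ℝ) : ℂ) + z‖ ≤ Real.sqrt 2 + 1 + M := by
      calc ‖((cliffordX φ θ 0 : ℝ) : ℂ) + z‖
          ≤ ‖((cliffordX φ θ 0 : ℝ) : ℂ)‖ + ‖z‖ := norm_add_le _ _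
        _ ≤ Real.sqrt 2 + 1 + M := by
            rw [Complex.norm_real, Real.norm_eq_abs]
            have := abs_x0 φ θ
            linarith
    rw [h1]
    have := norm_nonneg (((cliffordX φ θ 0 : ℝ) : ℂ) + z)
    have := norm_nonneg (((Real.sqrt 2 + Real.cos φ : ℝ) : ℂ))
    nlinarith [one_lt_sqrt2, le_trans (norm_nonneg z) hM]
  show ‖_‖ ≤ _
  unfold cgC'
  rw [norm_div, norm_pow]
  have hM0 : 0 ≤ M := le_trans (norm_nonneg z) hM
  have hd6 : δ ^ 6 ≤ ‖cdenC z φ θ‖ ^ 3 := by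
    calc δ ^ 6 = (δ ^ 2) ^ 3 := by ring
    _ ≤ _ := pow_le_pow_left₀ (by positivity) hd 3
  apply div_le_div₀ ?_ hnum (by positivity) hd6
  nlinarith [one_lt_sqrt2]

lemma cont_cgC_phi {z : ℂ} (hz : z ∈ UC) (θ : ℝ) : Continuous fun φ => cgC z φ θ := by
  have h := (cont_cgC hz).comp (f := fun φ : ℝ => ((φ, θ) : ℝ × ℝ))
    (continuous_id.prodMk continuous_const)
  exact h

lemma cont_cgC'_phi {z : ℂ} (hz : z ∈ UC) (θ : ℝ) : Continuous fun φ => cgC' z φ θ := by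
  have h := (cont_cgC' hz).comp (f := fun φ : ℝ => ((φ, θ) : ℝ × ℝ))
    (continuous_id.prodMk continuous_const)
  exact h

lemma abs_in_ball {z0 z : ℂ} {ε : ℝ} (hzb : z ∈ ball z0 ε) :
    ‖z‖ ≤ ‖z0‖ + ε := by
  rw [mem_ball, Complex.dist_eq] at hzb
  calc ‖z‖ = ‖z0 + (z - z0)‖ := by ring_nf
  _ ≤ ‖z0‖ + ‖z - z0‖ := norm_add_le _ _
  _ ≤ _ := by linarith

set_option maxHeartbeats 1000000 in
lemma inner_deriv {z0 : ℂ} (hz : z0 ∈ UC) (θ : ℝ) :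
    IntervalIntegrable (fun φ => cgC' z0 φ θ) MeasureTheory.volume 0 (2*π) ∧
    HasDerivAt (fun z => ∫ φ in (0:ℝ)..(2*π), cgC z φ θ)
      (∫ φ in (0:ℝ)..(2*π), cgC' z0 φ θ) z0 := by
  set ε := (z0.re - (Real.sqrt 2 + 1)) / 2 with hεdef
  have hε : 0 < ε := by
    have : Real.sqrt 2 + 1 < z0.re := hz
    simp only [hεdef]; linarith
  set M := ‖z0‖ + ε with hMdef
  set B := 4 * (Real.sqrt 2 + 1) * (Real.sqrt 2 + 1 + M) / ε ^ 6 with hBdef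
  apply intervalIntegral.hasDerivAt_integral_of_dominated_loc_of_deriv_le
    (F := fun z φ => cgC z φ θ) (F' := fun z φ => cgC' z φ θ) (x₀ := z0)
    (a := 0) (b := 2*π) (bound := fun _ => B) (ball_mem_nhds z0 hε)
  · filter_upwards [isOpen_UC.mem_nhds hz] with z hzU
    exact ((cont_cgC_phi hzU θ).aestronglyMeasurable).restrict
  · exact (cont_cgC_phi hz θ).intervalIntegrable _ _
  · exact ((cont_cgC'_phi hz θ).aestronglyMeasurable).restrict
  · filter_upwards with φ _ z hzb
    obtain ⟨hzU, hδ⟩ := ball_sub_UC hz hzb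
    exact norm_cgC'_le hzU hε hδ (by linarith [one_lt_sqrt2, hε]) φ θ M
      (by simpa [hMdef] using abs_in_ball hzb)
  · exact intervalIntegrable_const
  · filter_upwards with φ _ z hzb
    exact hasDerivAt_cgC (ball_sub_UC hz hzb).1 φ θ

noncomputable def GC (z : ℂ) : ℂ := ∫ θ in (0:ℝ)..(2*π), ∫ φ in (0:ℝ)..(2*π), cgC z φ θ

lemma cont_inner_theta {z : ℂ} (hz : z ∈ UC) :
    Continuous fun θ => ∫ φ in (0:ℝ)..(2*π), cgC z φ θ := by
  apply intervalIntegral.continuous_parametric_intervalIntegral_of_continuous'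
    (f := fun θ φ => cgC z φ θ)
  have h := (cont_cgC hz).comp (f := fun p : ℝ × ℝ => ((p.2, p.1) : ℝ × ℝ))
    (continuous_snd.prodMk continuous_fst)
  exact h

lemma cont_inner_theta' {z : ℂ} (hz : z ∈ UC) :
    Continuous fun θ => ∫ φ in (0:ℝ)..(2*π), cgC' z φ θ := by
  apply intervalIntegral.continuous_parametric_intervalIntegral_of_continuous'
    (f := fun θ φ => cgC' z φ θ)
  have h := (cont_cgC' hz).comp (f := fun p : ℝ × ℝ => ((p.2, p.1) : ℝ × ℝ))
    (continuous_snd.prodMk continuous_fst)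
  exact h

set_option maxHeartbeats 1000000 in
lemma GC_hasDeriv {z0 : ℂ} (hz : z0 ∈ UC) :
    IntervalIntegrable (fun θ => ∫ φ in (0:ℝ)..(2*π), cgC' z0 φ θ)
      MeasureTheory.volume 0 (2*π) ∧
    HasDerivAt (fun z => ∫ θ in (0:ℝ)..(2*π), ∫ φ in (0:ℝ)..(2*π), cgC z φ θ)
      (∫ θ in (0:ℝ)..(2*π), ∫ φ in (0:ℝ)..(2*π), cgC' z0 φ θ) z0 := by
  set ε := (z0.re - (Real.sqrt 2 + 1)) / 2 with hεdef
  have hε : 0 < ε := by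
    have : Real.sqrt 2 + 1 < z0.re := hz
    simp only [hεdef]; linarith
  set M := ‖z0‖ + ε with hMdef
  set B := 4 * (Real.sqrt 2 + 1) * (Real.sqrt 2 + 1 + M) / ε ^ 6 with hBdef
  apply intervalIntegral.hasDerivAt_integral_of_dominated_loc_of_deriv_le
    (μ := MeasureTheory.volume)
    (F := fun z θ => ∫ φ in (0:ℝ)..(2*π), cgC z φ θ)
    (F' := fun z θ => ∫ φ in (0:ℝ)..(2*π), cgC' z φ θ) (x₀ := z0)
    (a := 0) (b := 2*π) (bound := fun _ => B * |2*π - 0|) (ball_mem_nhds z0 hε)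
  · filter_upwards [isOpen_UC.mem_nhds hz] with z hzU
    exact ((cont_inner_theta hzU).aestronglyMeasurable).restrict
  · exact (cont_inner_theta hz).intervalIntegrable _ _
  · exact ((cont_inner_theta' hz).aestronglyMeasurable).restrict
  · filter_upwards with θ _ z hzb
    obtain ⟨hzU, hδ⟩ := ball_sub_UC hz hzb
    apply intervalIntegral.norm_integral_le_of_norm_le_const
    intro φ _
    exact norm_cgC'_le hzU hε hδ (by linarith [one_lt_sqrt2, hε]) φ θ M
      (by simpa [hMdef] using abs_in_ball hzb)
  · exact intervalIntegrable_const
  · filter_upwards with θ _ z hzb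
    exact (inner_deriv (ball_sub_UC hz hzb).1 θ).2

lemma GC_diff : DifferentiableOn ℂ GC UC := fun _ hz =>
  ((GC_hasDeriv hz).2.differentiableAt).differentiableWithinAt

lemma GC_analytic : AnalyticOnNhd ℂ GC UC := GC_diff.analyticOnNhd isOpen_UC

noncomputable def FR (ξ : ℝ) : ℝ := ∫ θ in (0:ℝ)..(2*π), ∫ φ in (0:ℝ)..(2*π), tg ξ φ θ

lemma cg_real (ξ φ θ : ℝ) : cgC (↑ξ) φ θ = ((tg ξ φ θ : ℝ) : ℂ) := by
  unfold cgC tg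
  rw [cdenC_real]
  push_cast
  ring

lemma GC_real (ξ : ℝ) : GC ↑ξ = ((FR ξ : ℝ) : ℂ) := by
  have hφ : ∀ θ : ℝ, (∫ φ in (0:ℝ)..(2*π), cgC ↑ξ φ θ)
      = (((∫ φ in (0:ℝ)..(2*π), tg ξ φ θ) : ℝ) : ℂ) := by
    intro θ
    rw [intervalIntegral.integral_congr (g := fun φ => ((tg ξ φ θ : ℝ) : ℂ))
      (fun φ _ => cg_real ξ φ θ)]
    exact RCLike.intervalIntegral_ofReal
  unfold GC FR
  rw [intervalIntegral.integral_congr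
    (g := fun θ => (((∫ φ in (0:ℝ)..(2*π), tg ξ φ θ) : ℝ) : ℂ)) (fun θ _ => hφ θ)]
  exact RCLike.intervalIntegral_ofReal

lemma FR_eq : FR = fun ξ : ℝ => (GC ↑ξ).re := by
  funext ξ
  rw [GC_real]
  exact (Complex.ofReal_re _).symm

lemma FR_contDiffOn : ContDiffOn ℝ (⊤ : ℕ∞) FR (Set.Ioi (Real.sqrt 2 + 1)) := by
  have hofReal : AnalyticOnNhd ℝ (fun ξ : ℝ => (ξ : ℂ)) (Set.Ioi (Real.sqrt 2 + 1)) :=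
    fun x _ => Complex.ofRealCLM.analyticAt x
  have hGC : AnalyticOnNhd ℝ GC UC := GC_analytic.restrictScalars
  have hmaps : Set.MapsTo (fun ξ : ℝ => (ξ : ℂ)) (Set.Ioi (Real.sqrt 2 + 1)) UC := by
    intro x hx
    simpa [UC] using hx
  have hcomp : AnalyticOnNhd ℝ (fun ξ : ℝ => GC ↑ξ) (Set.Ioi (Real.sqrt 2 + 1)) :=
    hGC.comp hofReal hmaps
  have h1 : AnalyticOnNhd ℝ FR (Set.Ioi (Real.sqrt 2 + 1)) := by
    rw [FR_eq]
    exact fun x hx => (Complex.reCLM.analyticAt _).comp (hcomp x hx)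
  exact h1.contDiffOn isOpen_Ioi.uniqueDiffOn

lemma cont_tg_phi {ξ : ℝ} (hξ : Real.sqrt 2 + 1 < ξ) (θ : ℝ) :
    Continuous fun φ => tg ξ φ θ := by
  have h := (cont_tg hξ).comp (f := fun φ : ℝ => ((φ, θ) : ℝ × ℝ))
    (continuous_id.prodMk continuous_const)
  exact h

lemma cont_inner_real {ξ : ℝ} (hξ : Real.sqrt 2 + 1 < ξ) :
    Continuous fun θ => ∫ φ in (0:ℝ)..(2*π), tg ξ φ θ := by
  apply intervalIntegral.continuous_parametric_intervalIntegral_of_continuous'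
    (f := fun θ φ => tg ξ φ θ)
  have h := (cont_tg hξ).comp (f := fun p : ℝ × ℝ => ((p.2, p.1) : ℝ × ℝ))
    (continuous_snd.prodMk continuous_fst)
  exact h

lemma inner_pos {ξ : ℝ} (hξ : Real.sqrt 2 + 1 < ξ) (θ : ℝ) :
    0 < ∫ φ in (0:ℝ)..(2*π), tg ξ φ θ :=
  intervalIntegral_pos_of_pos ((cont_tg_phi hξ θ).intervalIntegrable _ _)
    (fun φ => tg_pos hξ φ θ) Real.two_pi_pos

lemma FR_pos {ξ : ℝ} (hξ : Real.sqrt 2 + 1 < ξ) : 0 < FR ξ :=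
  intervalIntegral_pos_of_pos ((cont_inner_real hξ).intervalIntegrable _ _)
    (fun θ => inner_pos hξ θ) Real.two_pi_pos

lemma tg_lt {ξ₁ ξ₂ : ℝ} (h1 : Real.sqrt 2 + 1 < ξ₁) (h12 : ξ₁ < ξ₂) (φ θ : ℝ) :
    tg ξ₂ φ θ < tg ξ₁ φ θ := by
  have hx := x0_add_pos h1 φ θ
  have hden : tden ξ₁ φ θ < tden ξ₂ φ θ := by
    unfold tden
    nlinarith
  have h1p := tden_pos h1 φ θ
  apply div_lt_div_of_pos_left (num_pos φ) (pow_pos h1p 2)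
  exact pow_lt_pow_left₀ hden h1p.le (by norm_num)

lemma inner_lt {ξ₁ ξ₂ : ℝ} (h1 : Real.sqrt 2 + 1 < ξ₁) (h12 : ξ₁ < ξ₂) (θ : ℝ) :
    (∫ φ in (0:ℝ)..(2*π), tg ξ₂ φ θ) < ∫ φ in (0:ℝ)..(2*π), tg ξ₁ φ θ := by
  have h2 : Real.sqrt 2 + 1 < ξ₂ := lt_trans h1 h12
  have key : 0 < ∫ φ in (0:ℝ)..(2*π), (tg ξ₁ φ θ - tg ξ₂ φ θ) :=
    intervalIntegral_pos_of_pos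
      (((cont_tg_phi h1 θ).sub (cont_tg_phi h2 θ)).intervalIntegrable _ _)
      (fun φ => sub_pos.2 (tg_lt h1 h12 φ θ)) Real.two_pi_pos
  rw [intervalIntegral.integral_sub ((cont_tg_phi h1 θ).intervalIntegrable _ _)
    ((cont_tg_phi h2 θ).intervalIntegrable _ _), sub_pos] at key
  exact key

lemma FR_lt {ξ₁ ξ₂ : ℝ} (h1 : Real.sqrt 2 + 1 < ξ₁) (h12 : ξ₁ < ξ₂) : FR ξ₂ < FR ξ₁ := by
  have h2 : Real.sqrt 2 + 1 < ξ₂ := lt_trans h1 h12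
  unfold FR
  have key : 0 < ∫ θ in (0:ℝ)..(2*π),
      ((∫ φ in (0:ℝ)..(2*π), tg ξ₁ φ θ) - ∫ φ in (0:ℝ)..(2*π), tg ξ₂ φ θ) :=
    intervalIntegral_pos_of_pos
      (((cont_inner_real h1).sub (cont_inner_real h2)).intervalIntegrable _ _)
      (fun θ => sub_pos.2 (inner_lt h1 h12 θ)) Real.two_pi_pos
  rw [intervalIntegral.integral_sub ((cont_inner_real h1).intervalIntegrable _ _)
    ((cont_inner_real h2).intervalIntegrable _ _), sub_pos] at key
  exact key

lemma torArea_eq (ξ η : ℝ) : torArea ξ η = η ^ 4 * FR ξ := rfl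

/-- `A(ξ,η)` is smooth on `(√2+1,∞) × (0,∞)`, strictly increasing in `η`,
strictly decreasing in `ξ`, with `A(ξ,η) → 0` as `η → 0⁺` and `A(ξ,η) → ∞` as
`η → ∞`, for each fixed `ξ`. -/
theorem stmt6 :
    ContDiffOn ℝ (⊤ : ℕ∞) (fun p : ℝ × ℝ => torArea p.1 p.2)
      ((Set.Ioi (Real.sqrt 2 + 1)) ×ˢ (Set.Ioi (0:ℝ))) ∧
    (∀ ξ ∈ Set.Ioi (Real.sqrt 2 + 1), StrictMonoOn (fun η => torArea ξ η) (Set.Ioi 0)) ∧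
    (∀ η ∈ Set.Ioi (0:ℝ),
      StrictAntiOn (fun ξ => torArea ξ η) (Set.Ioi (Real.sqrt 2 + 1))) ∧
    (∀ ξ ∈ Set.Ioi (Real.sqrt 2 + 1),
      Filter.Tendsto (fun η => torArea ξ η) (nhdsWithin 0 (Set.Ioi 0)) (nhds 0) ∧
      Filter.Tendsto (fun η => torArea ξ η) Filter.atTop Filter.atTop) := by
  have hform : (fun p : ℝ × ℝ => torArea p.1 p.2) = fun p : ℝ × ℝ => p.2 ^ 4 * FR p.1 := by
    funext p; exact torArea_eq p.1 p.2
  refine ⟨?_, ?_, ?_, ?_⟩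
  · rw [hform]
    apply ContDiffOn.mul
    · exact (contDiff_snd.pow 4).contDiffOn
    · exact FR_contDiffOn.comp contDiffOn_fst (fun p hp => hp.1)
  · intro ξ hξ a ha b hb hab
    simp only [torArea_eq]
    have h4 : a ^ 4 < b ^ 4 := pow_lt_pow_left₀ hab (le_of_lt ha) (by norm_num)
    exact mul_lt_mul_of_pos_right h4 (FR_pos hξ)
  · intro η hη ξ₁ h1 ξ₂ h2 hlt
    simp only [torArea_eq]
    exact mul_lt_mul_of_pos_left (FR_lt h1 hlt) (pow_pos hη 4)
  · intro ξ hξ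
    constructor
    · have h : Filter.Tendsto (fun η : ℝ => η ^ 4 * FR ξ) (nhds 0) (nhds 0) := by
        have := ((continuous_pow 4).tendsto (0:ℝ)).mul_const (FR ξ)
        simpa using this
      simp only [torArea_eq]
      exact h.mono_left nhdsWithin_le_nhds
    · simp only [torArea_eq]
      exact (Filter.tendsto_pow_atTop (by norm_num : (4:ℕ) ≠ 0)).atTop_mul_const (FR_pos hξ)
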